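/- arXiv:1801.03830 — 2 statements merged into one kernel-verified Lean document; each statement's English description precedes it below -/
import Mathlib

section
/- Let X' ⊆ ℝ^n be compact, 𝒳 ⊆ X' a nonempty closed set, φ : 𝒳 → ℝ^n continuous, Γ₁ : ℝ^n ⇉ ℝ^n a closed multifunction, and let 𝒮* = {x ∈ 𝒳 : 0 ∈ φ(x) + Γ₁(x)} be nonempty. Define ℛ(ε) = inf { d(0, φ(x) + Γ₁(x)) : x ∈ 𝒳, d(x, 𝒮*) ≥ ε }. Then ℛ(0) = 0, ℛ is nondecreasing on [0, ∞), and ℛ(ε) > 0 for every ε > 0. -/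
/-!
On the compact set `K ε = {x ∈ 𝒳 | ε ≤ d(x, 𝒮*)}` the residual `x ↦ d(0, φ x + Γ₁ x)` is lower
semicontinuous: if the closed graph misses `{x} × B̄(0, r)`, the tube lemma over the compact ball
`B̄(0, r)` makes it miss `U × B̄(0, r)` for a neighbourhood `U` of `x`. Hence the residual attains
its infimum over `K ε`, and that minimum is positive because a zero residual at a point of the
closed set `φ x + Γ₁ x` means `x ∈ 𝒮*`, which `K ε` excludes for `ε > 0`.
-/

open EMetric Metric Set Filter Topology

theorem lowerSemicontinuousOn_infEDist_of_isClosed_graph {α E : Type*} [TopologicalSpace α]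
    [PseudoMetricSpace E] [ProperSpace E] {s : Set α} {F : α → Set E}
    (hF : IsClosed {p : α × E | p.1 ∈ s ∧ p.2 ∈ F p.1}) (y : E) :
    LowerSemicontinuousOn (fun x => infEDist y (F x)) s := by
  intro x _ c hc
  obtain ⟨r, hcr, hr⟩ := ENNReal.lt_iff_exists_nnreal_btwn.1 hc
  have hK : IsCompact (closedEBall y r) := by
    rw [closedEBall_coe]; exact isCompact_closedBall y r
  have hball : ∀ z ∈ closedEBall y r,
      ∀ᶠ p : α × E in 𝓝 (x, z), ¬(p.1 ∈ s ∧ p.2 ∈ F p.1) := fun z hz =>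
    hF.isOpen_compl.mem_nhds fun hxz =>
      hr.not_ge ((infEDist_le_edist_of_mem hxz.2).trans (mem_closedEBall'.1 hz))
  filter_upwards [nhdsWithin_le_nhds (hK.eventually_forall_of_forall_eventually
      (P := fun x' z => ¬(x' ∈ s ∧ z ∈ F x')) hball), self_mem_nhdsWithin] with x' hx' hx's
  refine hcr.trans_le (le_infEDist.2 fun z hz => ?_)
  by_contra! hzr
  exact hx' z (mem_closedEBall'.2 hzr.le) ⟨hx's, hz⟩

theorem isClosed_graph_add_image_of_continuousOn {α E : Type*} [TopologicalSpace α]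
    [TopologicalSpace E] [AddGroup E] [IsTopologicalAddGroup E] {s : Set α} (hs : IsClosed s)
    {φ : α → E} (hφ : ContinuousOn φ s) {Γ : α → Set E}
    (hΓ : IsClosed {p : α × E | p.2 ∈ Γ p.1}) :
    IsClosed {p : α × E | p.1 ∈ s ∧ p.2 ∈ (fun z => φ p.1 + z) '' Γ p.1} := by
  have hgraph : {p : α × E | p.1 ∈ s ∧ p.2 ∈ (fun z => φ p.1 + z) '' Γ p.1} =
      s ×ˢ univ ∩ (fun p : α × E => (p.1, -φ p.1 + p.2)) ⁻¹' {p | p.2 ∈ Γ p.1} := by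
    ext p
    simp [image_add_left]
  rw [hgraph]
  refine ContinuousOn.preimage_isClosed_of_isClosed ?_ (hs.prod isClosed_univ) hΓ
  exact continuousOn_fst.prodMk
    ((hφ.comp continuousOn_fst fun p hp => hp.1).neg.add continuousOn_snd)

theorem IsCompact.biInf_pos_of_lowerSemicontinuousOn {α : Type*} [TopologicalSpace α]
    {K : Set α} (hK : IsCompact K) {f : α → ENNReal} (hf : LowerSemicontinuousOn f K)
    (hpos : ∀ x ∈ K, 0 < f x) : 0 < ⨅ x ∈ K, f x := by
  rcases K.eq_empty_or_nonempty with rfl | hne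
  · simp
  obtain ⟨p, hp, hmin⟩ := hf.exists_isMinOn hne hK
  exact (hpos p hp).trans_le (le_iInf₂ hmin)

theorem residual_function_properties_general {n : ℕ}
    (X' : Set (EuclideanSpace ℝ (Fin n))) (hX' : IsCompact X')
    (𝒳 : Set (EuclideanSpace ℝ (Fin n))) (h𝒳X' : 𝒳 ⊆ X')
    (h𝒳cl : IsClosed 𝒳)
    (φ : EuclideanSpace ℝ (Fin n) → EuclideanSpace ℝ (Fin n))
    (hφ : ContinuousOn φ 𝒳)
    (Γ₁ : EuclideanSpace ℝ (Fin n) → Set (EuclideanSpace ℝ (Fin n)))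
    (hΓ₁ : IsClosed {p : EuclideanSpace ℝ (Fin n) × EuclideanSpace ℝ (Fin n) | p.2 ∈ Γ₁ p.1})
    (S : Set (EuclideanSpace ℝ (Fin n)))
    (hS : S = {x ∈ 𝒳 | (0 : EuclideanSpace ℝ (Fin n)) ∈ (fun z => φ x + z) '' Γ₁ x})
    (hSne : S.Nonempty)
    (R : ℝ → ENNReal)
    (hR : R = fun ε => ⨅ x ∈ {x ∈ 𝒳 | ε ≤ Metric.infDist x S},
      infEdist 0 ((fun z => φ x + z) '' Γ₁ x)) :
    R 0 = 0 ∧ MonotoneOn R (Set.Ici 0) ∧ ∀ ε : ℝ, 0 < ε → 0 < R ε := by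
  subst hR
  have hG := isClosed_graph_add_image_of_continuousOn h𝒳cl hφ hΓ₁
  refine ⟨?_, fun a _ b _ hab => biInf_mono fun x hx => ⟨hx.1, hab.trans hx.2⟩, fun ε hε => ?_⟩
  · obtain ⟨x, hx⟩ := hSne
    rw [hS] at hx
    exact nonpos_iff_eq_zero.1
      (iInf₂_le_of_le x ⟨hx.1, infDist_nonneg⟩ (infEDist_zero_of_mem hx.2).le)
  have hK : IsCompact {x ∈ 𝒳 | ε ≤ Metric.infDist x S} :=
    hX'.of_isClosed_subset (h𝒳cl.inter (isClosed_le continuous_const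
      (continuous_infDist_pt S))) fun x hx => h𝒳X' hx.1
  refine hK.biInf_pos_of_lowerSemicontinuousOn
    ((lowerSemicontinuousOn_infEDist_of_isClosed_graph hG 0).mono fun x hx => hx.1)
    fun x hx => infEDist_pos_iff_notMem_closure.2 fun hx0 => ?_
  have hxS : x ∈ S := by
    rw [hS]
    have hclosed : IsClosed ((fun z => φ x + z) '' Γ₁ x) :=
      (Homeomorph.addLeft (φ x)).isClosedMap _ (hΓ₁.preimage (Continuous.prodMk_right x))
    exact ⟨hx.1, hclosed.closure_eq ▸ hx0⟩
  linarith [hx.2, infDist_zero_of_mem hxS]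

/-- properties of the residual function ℛ. -/
theorem residual_function_properties {n : ℕ}
    (X' : Set (EuclideanSpace ℝ (Fin n))) (hX' : IsCompact X')
    (𝒳 : Set (EuclideanSpace ℝ (Fin n))) (h𝒳X' : 𝒳 ⊆ X')
    (h𝒳ne : 𝒳.Nonempty) (h𝒳cl : IsClosed 𝒳)
    (φ : EuclideanSpace ℝ (Fin n) → EuclideanSpace ℝ (Fin n))
    (hφ : ContinuousOn φ 𝒳)
    (Γ₁ : EuclideanSpace ℝ (Fin n) → Set (EuclideanSpace ℝ (Fin n)))
    (hΓ₁ : IsClosed {p : EuclideanSpace ℝ (Fin n) × EuclideanSpace ℝ (Fin n) | p.2 ∈ Γ₁ p.1})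
    (S : Set (EuclideanSpace ℝ (Fin n)))
    (hS : S = {x ∈ 𝒳 | (0 : EuclideanSpace ℝ (Fin n)) ∈ (fun z => φ x + z) '' Γ₁ x})
    (hSne : S.Nonempty)
    (R : ℝ → ENNReal)
    (hR : R = fun ε => ⨅ x ∈ {x ∈ 𝒳 | ε ≤ Metric.infDist x S},
      infEdist 0 ((fun z => φ x + z) '' Γ₁ x)) :
    R 0 = 0 ∧ MonotoneOn R (Set.Ici 0) ∧ ∀ ε : ℝ, 0 < ε → 0 < R ε :=
  residual_function_properties_general X' hX' 𝒳 h𝒳X' h𝒳cl φ hφ Γ₁ hΓ₁ S hS hSne R hR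
end

section
/- Let H ∈ ℝ^{l×l}, U ⊆ ℝ^l a nonempty closed convex set, and z₀ a solution of 0 ∈ Hz + q₀ + N_U(z). If uᵀHu > 0 for all nonzero u in the subspace spanned by the critical cone 𝒞₀ = {z' ∈ T_U(z₀) : z' ⊥ (Hz₀ + q₀)}, then the critical face condition holds at (q₀, z₀): for any faces F₁, F₂ of 𝒞₀ with F₂ ⊆ F₁, u ∈ F₁ − F₂ and Hᵀu ∈ (F₁ − F₂)* imply u = 0. -/
open scoped RealInnerProductSpace Pointwise

variable {l : ℕ}

/-- Normal cone to a set `U` at a point `z` (empty if `z ∉ U`). -/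
def normalCone (U : Set (EuclideanSpace ℝ (Fin l))) (z : EuclideanSpace ℝ (Fin l)) :
    Set (EuclideanSpace ℝ (Fin l)) :=
  {v | z ∈ U ∧ ∀ w ∈ U, ⟪v, w - z⟫ ≤ 0}

/-- (Negative) dual cone of a set `K`. -/
def negDual (K : Set (EuclideanSpace ℝ (Fin l))) : Set (EuclideanSpace ℝ (Fin l)) :=
  {w | ∀ v ∈ K, ⟪w, v⟫ ≤ 0}

/-- `F` is a face of the convex set `C`. -/
def IsFaceOf (C F : Set (EuclideanSpace ℝ (Fin l))) : Prop :=
  F ⊆ C ∧ Convex ℝ F ∧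
    ∀ x ∈ C, ∀ y ∈ C, (∃ z ∈ openSegment ℝ x y, z ∈ F) → x ∈ F ∧ y ∈ F

/-- positivity of `uᵀHu` on the span of the critical cone implies the
critical face condition at `(q₀, z₀)`. -/
theorem critical_face_condition_of_posdef_on_span
    (H : EuclideanSpace ℝ (Fin l) →ₗ[ℝ] EuclideanSpace ℝ (Fin l))
    (U : Set (EuclideanSpace ℝ (Fin l))) (hUne : U.Nonempty) (hUcl : IsClosed U)
    (hUconv : Convex ℝ U)
    (q₀ z₀ : EuclideanSpace ℝ (Fin l))
    (hsol : -(H z₀ + q₀) ∈ normalCone U z₀)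
    (C₀ : Set (EuclideanSpace ℝ (Fin l)))
    (hC₀ : C₀ = {z' ∈ tangentConeAt ℝ U z₀ | ⟪z', H z₀ + q₀⟫ = 0})
    (hpos : ∀ u ∈ Submodule.span ℝ C₀, u ≠ 0 → 0 < ⟪u, H u⟫) :
    ∀ F₁ F₂ : Set (EuclideanSpace ℝ (Fin l)),
      IsFaceOf C₀ F₁ → IsFaceOf C₀ F₂ → F₂ ⊆ F₁ →
      ∀ u ∈ F₁ - F₂, (LinearMap.adjoint H) u ∈ negDual (F₁ - F₂) → u = 0 := by
  intro F₁ F₂ hF₁ hF₂ _ u hu hdual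
  by_contra hne
  obtain ⟨u₁, hu₁, u₂, hu₂, rfl⟩ := hu
  have hspan : u₁ - u₂ ∈ Submodule.span ℝ C₀ :=
    sub_mem (Submodule.subset_span (hF₁.1 hu₁)) (Submodule.subset_span (hF₂.1 hu₂))
  have h1 := hpos _ hspan hne
  have h2 := hdual _ ⟨u₁, hu₁, u₂, hu₂, rfl⟩
  rw [LinearMap.adjoint_inner_left] at h2
  linarith
end
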